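/- arXiv:1604.03157 — 3 statements merged into one kernel-verified Lean document; each statement's English description precedes it below -/
import Mathlib

section
/- Let H ∈ (0,1), let r ≥ 1 be an integer with H < 1 - 1/(2r), and let ρ(k) = (|k+1|^{2H} + |k-1|^{2H} - 2|k|^{2H})/2. Then the series ∑_{k ∈ ℤ} |ρ(k)|^r converges. -/
/-- The correlation function of fractional Brownian increments. -/
noncomputable def rho (H : ℝ) (k : ℤ) : ℝ :=
  (|(k : ℝ) + 1| ^ (2*H) + |(k : ℝ) - 1| ^ (2*H) - 2 * |(k : ℝ)| ^ (2*H)) / 2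

open Set Real

/-- Mean value theorem for `x ^ p` on positive intervals. -/
lemma rpow_mvt (p : ℝ) {a b : ℝ} (ha : 0 < a) (hab : a < b) :
    ∃ c ∈ Ioo a b, b ^ p - a ^ p = p * c ^ (p - 1) * (b - a) := by
  have hcont : ContinuousOn (fun x : ℝ => x ^ p) (Icc a b) := by
    intro x hx
    exact (Real.continuousAt_rpow_const x p
      (Or.inl (ne_of_gt (lt_of_lt_of_le ha hx.1)))).continuousWithinAt
  have hderiv : ∀ x ∈ Ioo a b, HasDerivAt (fun x : ℝ => x ^ p) (p * x ^ (p - 1)) x := by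
    intro x hx
    exact Real.hasDerivAt_rpow_const (Or.inl (ne_of_gt (lt_trans ha hx.1)))
  obtain ⟨c, hc, hceq⟩ := exists_hasDerivAt_eq_slope (fun x : ℝ => x ^ p)
    (fun x => p * x ^ (p - 1)) hab hcont hderiv
  refine ⟨c, hc, ?_⟩
  have hba : b - a ≠ 0 := sub_ne_zero.2 (ne_of_gt hab)
  field_simp at hceq
  linarith [hceq]

/-- Key decay bound: for real `t ≥ 2`,
`|(t+1)^(2H) + (t-1)^(2H) - 2 t^(2H)| / 2 ≤ 2 * (t-1)^(2H-2)`. -/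
lemma rho_decay (H : ℝ) (hH0 : 0 < H) (hH1 : H < 1) {t : ℝ} (ht : 2 ≤ t) :
    |((t + 1) ^ (2*H) + (t - 1) ^ (2*H) - 2 * t ^ (2*H)) / 2|
      ≤ 2 * (t - 1) ^ (2*H - 2) := by
  have ht1 : (1 : ℝ) ≤ t - 1 := by linarith
  have ht0 : (0 : ℝ) < t - 1 := by linarith
  have htpos : (0 : ℝ) < t := by linarith
  obtain ⟨c2, hc2, hc2eq⟩ := rpow_mvt (2*H) ht0 (by linarith : t - 1 < t)
  obtain ⟨c1, hc1, hc1eq⟩ := rpow_mvt (2*H) htpos (by linarith : t < t + 1)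
  have hc2c1 : c2 < c1 := lt_trans hc2.2 hc1.1
  have hc2pos : 0 < c2 := lt_trans ht0 hc2.1
  obtain ⟨d, hd, hdeq⟩ := rpow_mvt (2*H - 1) hc2pos hc2c1
  -- |ρ| = H * |c1^(2H-1) - c2^(2H-1)|
  have hmain : (t + 1) ^ (2*H) + (t - 1) ^ (2*H) - 2 * t ^ (2*H)
      = 2*H * (c1 ^ (2*H - 1) - c2 ^ (2*H - 1)) := by
    have e1 : (t + 1) ^ (2*H) - t ^ (2*H) = 2*H * c1 ^ (2*H - 1) := by
      simpa using hc1eq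
    have e2 : t ^ (2*H) - (t - 1) ^ (2*H) = 2*H * c2 ^ (2*H - 1) := by
      simpa using hc2eq
    linarith
  rw [hmain, hdeq]
  have hd1 : t - 1 < d := lt_trans hc2.1 hd.1
  have hdpos : 0 < d := lt_trans hc2pos hd.1
  have hdbound : d ^ (2*H - 1 - 1) ≤ (t - 1) ^ (2*H - 2) := by
    have := Real.rpow_le_rpow_of_nonpos ht0 hd1.le (by linarith : 2*H - 1 - 1 ≤ 0)
    simpa [show 2*H - 1 - 1 = 2*H - 2 by ring] using this
  have hc1c2 : c1 - c2 ≤ 2 := by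
    have := hc1.2
    have := hc2.1
    linarith
  have hnn : (0 : ℝ) ≤ d ^ (2*H - 1 - 1) := Real.rpow_nonneg hdpos.le _
  have hnn2 : (0 : ℝ) ≤ c1 - c2 := by linarith
  have habs : |2*H * ((2*H - 1) * d ^ (2*H - 1 - 1) * (c1 - c2)) / 2|
      = H * |2*H - 1| * (d ^ (2*H - 1 - 1) * (c1 - c2)) := by
    have e : 2*H * ((2*H - 1) * d ^ (2*H - 1 - 1) * (c1 - c2)) / 2
        = H * ((2*H - 1) * (d ^ (2*H - 1 - 1) * (c1 - c2))) := by ring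
    rw [e, abs_mul, abs_mul, abs_of_pos hH0,
      abs_of_nonneg (mul_nonneg hnn hnn2)]
    ring
  rw [habs]
  have h1 : H * |2*H - 1| ≤ 1 := by
    rcases abs_cases (2*H - 1) with ⟨h, _⟩ | ⟨h, _⟩ <;> nlinarith
  have h2 : d ^ (2*H - 1 - 1) * (c1 - c2) ≤ (t - 1) ^ (2*H - 2) * 2 := by
    have := Real.rpow_nonneg ht0.le (2*H - 2)
    nlinarith
  have h3 : (0:ℝ) ≤ d ^ (2*H - 1 - 1) * (c1 - c2) := mul_nonneg hnn hnn2
  calc H * |2*H - 1| * (d ^ (2*H - 1 - 1) * (c1 - c2))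
      ≤ 1 * (d ^ (2*H - 1 - 1) * (c1 - c2)) := by
        apply mul_le_mul_of_nonneg_right h1 h3
    _ ≤ (t - 1) ^ (2*H - 2) * 2 := by linarith
    _ = 2 * (t - 1) ^ (2*H - 2) := by ring

lemma rho_bound (H : ℝ) (hH0 : 0 < H) (hH1 : H < 1) (k : ℤ) (hk : 2 ≤ k) :
    |rho H k| ≤ 2 * ((k : ℝ) - 1) ^ (2*H - 2) := by
  have hk2 : (2 : ℝ) ≤ (k : ℝ) := by exact_mod_cast hk
  have h1 : |(k : ℝ) + 1| = (k : ℝ) + 1 := abs_of_pos (by linarith)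
  have h2 : |(k : ℝ) - 1| = (k : ℝ) - 1 := abs_of_pos (by linarith)
  have h3 : |(k : ℝ)| = (k : ℝ) := abs_of_pos (by linarith)
  have := rho_decay H hH0 hH1 hk2
  unfold rho
  rw [h1, h2, h3]
  exact this

lemma rho_even (H : ℝ) (k : ℤ) : rho H (-k) = rho H k := by
  unfold rho
  push_cast
  have e1 : -(k : ℝ) + 1 = -((k : ℝ) - 1) := by ring
  have e2 : -(k : ℝ) - 1 = -((k : ℝ) + 1) := by ring
  rw [e1, e2, abs_neg, abs_neg, abs_neg]
  ring

lemma summable_nat_rho (H : ℝ) (hH0 : 0 < H) (hH1 : H < 1) (r : ℕ) (hr : 1 ≤ r)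
    (hHr : H < 1 - 1/(2*r)) :
    Summable (fun n : ℕ => |rho H n| ^ r) := by
  rw [← summable_nat_add_iff 2]
  have hrpos : (0 : ℝ) < r := by exact_mod_cast hr
  have hp : (2*H - 2) * r < -1 := by
    have h : 2*H - 2 < -(1 / r) := by
      have : 1/(2*(r:ℝ)) = (1/r)/2 := by ring
      rw [this] at hHr
      linarith
    calc (2*H - 2) * r < (-(1/r)) * r := by
          apply mul_lt_mul_of_pos_right h hrpos
      _ = -1 := by field_simp
  have hsum : Summable (fun n : ℕ => (2:ℝ)^r * ((n:ℝ) + 1) ^ ((2*H - 2) * r)) := by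
    apply Summable.mul_left
    have : Summable (fun n : ℕ => ((n:ℝ)) ^ ((2*H - 2) * r)) :=
      Real.summable_nat_rpow.2 hp
    have h2 := (summable_nat_add_iff 1).2 this
    simpa [Nat.cast_add] using h2
  apply Summable.of_nonneg_of_le (fun n => by positivity) _ hsum
  intro n
  have hk : (2 : ℤ) ≤ ((n + 2 : ℕ) : ℤ) := by exact_mod_cast Nat.le_add_left 2 n
  have hb := rho_bound H hH0 hH1 ((n + 2 : ℕ) : ℤ) hk
  have hcast : (((n + 2 : ℕ) : ℤ) : ℝ) - 1 = (n : ℝ) + 1 := by push_cast; ring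
  rw [hcast] at hb
  have hnn : (0 : ℝ) ≤ ((n:ℝ) + 1) ^ (2*H - 2) := Real.rpow_nonneg (by positivity) _
  calc |rho H ((n + 2 : ℕ) : ℤ)| ^ r
      ≤ (2 * ((n:ℝ) + 1) ^ (2*H - 2)) ^ r := by
        apply pow_le_pow_left₀ (abs_nonneg _) hb
    _ = (2:ℝ)^r * (((n:ℝ) + 1) ^ (2*H - 2)) ^ r := by rw [mul_pow]
    _ = (2:ℝ)^r * ((n:ℝ) + 1) ^ ((2*H - 2) * r) := by
        rw [← Real.rpow_natCast (((n:ℝ) + 1) ^ (2*H - 2)) r,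
          ← Real.rpow_mul (by positivity)]

theorem stmt_7 (H : ℝ) (hH0 : 0 < H) (hH1 : H < 1) (r : ℕ) (hr : 1 ≤ r)
    (hHr : H < 1 - 1/(2*r)) :
    Summable (fun k : ℤ => |rho H k| ^ r) := by
  have hnat := summable_nat_rho H hH0 hH1 r hr hHr
  refine Summable.of_nat_of_neg (f := fun k : ℤ => |rho H k| ^ r) hnat ?_
  have : (fun n : ℕ => |rho H (-(n:ℤ))| ^ r) = (fun n : ℕ => |rho H (n:ℤ)| ^ r) := by
    funext n; rw [rho_even]
  rw [this]
  exact hnat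
end

section
/- Let H ∈ (0,1), r ≥ 1 an integer with H > 1 - 1/(2r), and let ρ(k) = (|k+1|^{2H} + |k-1|^{2H} - 2|k|^{2H})/2. Then there is a constant C = C(H,r) such that for all integers n ≥ 1 and reals t ≥ 0, 2^{-nrH} ∑_{k,l=0}^{⌊2^{n/2}t⌋-1} |ρ(k-l)|^r ≤ C ( t 2^{n(1/2 - rH)} + t^{2-(2-2H)r} 2^{n(1-r)} ). -/
open Real Set

/-- MVT for rpow on a nonnegative interval. -/
lemma mvt_rpow {p u v : ℝ} (hp : 0 < p) (hu : 0 ≤ u) (huv : u < v) :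
    ∃ c, u < c ∧ c < v ∧ v ^ p - u ^ p = p * c ^ (p - 1) * (v - u) := by
  have hcont : ContinuousOn (fun x : ℝ => x ^ p) (Icc u v) := fun x _ =>
    (Real.continuousAt_rpow_const x p (Or.inr hp.le)).continuousWithinAt
  have hderiv : ∀ x ∈ Ioo u v, HasDerivAt (fun x : ℝ => x ^ p) (p * x ^ (p - 1)) x := fun x hx =>
    Real.hasDerivAt_rpow_const (Or.inl (ne_of_gt (lt_of_le_of_lt hu hx.1)))
  obtain ⟨c, hc, hceq⟩ := exists_hasDerivAt_eq_slope (fun x : ℝ => x ^ p)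
    (fun x => p * x ^ (p - 1)) huv hcont hderiv
  refine ⟨c, hc.1, hc.2, ?_⟩
  rw [hceq]
  rw [div_mul_cancel₀ _ (sub_ne_zero.2 (ne_of_gt huv))]

lemma rho_neg (H : ℝ) (j : ℤ) : rho H (-j) = rho H j := by
  unfold rho
  push_cast
  rw [show -(j:ℝ) + 1 = -((j:ℝ) - 1) by ring, show -(j:ℝ) - 1 = -((j:ℝ) + 1) by ring,
    abs_neg, abs_neg, abs_neg]
  ring

lemma rho_nat_bound {H : ℝ} (hH2 : 1/2 < H) (hH1 : H < 1) (m : ℕ) (hm : 1 ≤ m) :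
    |rho H (m : ℤ)| ≤ 8 * (m : ℝ) ^ (2*H - 2) := by
  have h2H : 0 < 2 * H := by linarith
  rcases eq_or_lt_of_le hm with h1 | h2
  · -- m = 1
    subst_vars
    have e : rho H (1 : ℤ) = ((2:ℝ) ^ (2*H) - 2) / 2 := by
      unfold rho
      push_cast
      rw [show |(1:ℝ) - 1| = 0 by norm_num, Real.zero_rpow (ne_of_gt h2H),
        show |(1:ℝ) + 1| = 2 by norm_num, show |(1:ℝ)| = 1 by norm_num, Real.one_rpow]
      ring
    have hlo : (1:ℝ) ≤ (2:ℝ) ^ (2*H) := Real.one_le_rpow (by norm_num) h2H.le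
    have hhi : (2:ℝ) ^ (2*H) ≤ 4 := by
      calc (2:ℝ) ^ (2*H) ≤ (2:ℝ) ^ (2:ℝ) :=
            Real.rpow_le_rpow_of_exponent_le (by norm_num) (by linarith)
        _ = 4 := by rw [show (2:ℝ) = ((2:ℕ):ℝ) by norm_num, Real.rpow_natCast]; norm_num
    rw [show ((1:ℕ):ℤ) = (1:ℤ) by norm_num, e,
      show ((1:ℕ):ℝ) = (1:ℝ) by norm_num, Real.one_rpow]
    rw [abs_le]
    constructor <;> [linarith; linarith]
  · -- m ≥ 2
    have hx : (2:ℝ) ≤ (m:ℝ) := by exact_mod_cast h2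
    set x := (m:ℝ) with hxdef
    have h0x : (0:ℝ) < x - 1 := by linarith
    obtain ⟨c₁, hc₁l, hc₁r, hc₁⟩ := mvt_rpow h2H (by linarith : (0:ℝ) ≤ x) (by linarith : x < x + 1)
    obtain ⟨c₂, hc₂l, hc₂r, hc₂⟩ := mvt_rpow h2H (by linarith : (0:ℝ) ≤ x - 1) (by linarith : x - 1 < x)
    obtain ⟨c, hcl, hcr, hc⟩ := mvt_rpow (by linarith : (0:ℝ) < 2*H - 1)
      (by linarith : (0:ℝ) ≤ x - 1) (by linarith : x - 1 < x + 1)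
    have hrho : rho H (m : ℤ) = H * (c₁ ^ (2*H - 1) - c₂ ^ (2*H - 1)) := by
      unfold rho
      push_cast
      rw [abs_of_nonneg (by linarith : (0:ℝ) ≤ x + 1), abs_of_nonneg (by linarith : (0:ℝ) ≤ x - 1),
        abs_of_nonneg (by linarith : (0:ℝ) ≤ x)]
      have e1 : (x+1) ^ (2*H) - x ^ (2*H) = 2*H * c₁ ^ (2*H - 1) := by
        rw [hc₁]; ring
      have e2 : x ^ (2*H) - (x-1) ^ (2*H) = 2*H * c₂ ^ (2*H - 1) := by
        rw [hc₂]; ring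
      nlinarith [e1, e2]
    have hmono1 : c₁ ^ (2*H-1) ≤ (x+1) ^ (2*H-1) :=
      Real.rpow_le_rpow (by linarith) hc₁r.le (by linarith)
    have hmono2 : (x-1) ^ (2*H-1) ≤ c₂ ^ (2*H-1) :=
      Real.rpow_le_rpow (by linarith) hc₂l.le (by linarith)
    have hnn : c₂ ^ (2*H-1) ≤ c₁ ^ (2*H-1) :=
      Real.rpow_le_rpow (by linarith) (by linarith) (by linarith)
    have hstep : (x+1) ^ (2*H-1) - (x-1) ^ (2*H-1) = (2*H-1) * c ^ (2*H-1-1) * 2 := by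
      rw [hc]; ring
    have hcb : c ^ (2*H-1-1) ≤ (x-1) ^ (2*H-1-1) :=
      Real.rpow_le_rpow_of_nonpos h0x hcl.le (by linarith)
    have hxb : (x-1) ^ (2*H-1-1) ≤ (x/2) ^ (2*H-1-1) :=
      Real.rpow_le_rpow_of_nonpos (by linarith) (by linarith) (by linarith)
    have hhalf : (x/2) ^ (2*H-1-1) ≤ 2 * x ^ (2*H-2) := by
      rw [show 2*H-1-1 = 2*H-2 by ring, Real.div_rpow (by linarith) (by norm_num)]
      have h2e : (1:ℝ)/2 ≤ (2:ℝ) ^ (2*H-2) := by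
        calc (1:ℝ)/2 = (2:ℝ) ^ (-1 : ℝ) := by
              rw [Real.rpow_neg_one]; norm_num
          _ ≤ (2:ℝ) ^ (2*H-2) := Real.rpow_le_rpow_of_exponent_le (by norm_num) (by linarith)
      have hxp : (0:ℝ) ≤ x ^ (2*H-2) := Real.rpow_nonneg (by linarith) _
      rw [div_le_iff₀ (by linarith)]
      nlinarith
    have hHnn : (0:ℝ) ≤ H := by linarith
    have h2H1 : (0:ℝ) ≤ 2*H - 1 := by linarith
    rw [hrho, abs_of_nonneg (mul_nonneg hHnn (by linarith [hnn]))]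
    have k1 : c₁ ^ (2*H-1) - c₂ ^ (2*H-1) ≤ (2*H-1) * c ^ (2*H-1-1) * 2 := by
      have := sub_le_sub hmono1 hmono2
      linarith [hstep]
    have k2 : (2*H-1) * c ^ (2*H-1-1) ≤ (2*H-1) * (2 * x ^ (2*H-2)) :=
      mul_le_mul_of_nonneg_left (le_trans hcb (le_trans hxb hhalf)) h2H1
    have hxp2 : (0:ℝ) ≤ x ^ (2*H-2) := Real.rpow_nonneg (by linarith) _
    have hd0 : (0:ℝ) ≤ c₁ ^ (2*H-1) - c₂ ^ (2*H-1) := by linarith [hnn]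
    have k3 : H * (c₁ ^ (2*H-1) - c₂ ^ (2*H-1)) ≤ 1 * ((2*H-1) * c ^ (2*H-1-1) * 2) :=
      mul_le_mul hH1.le k1 hd0 (by norm_num)
    have k4 : (2*H-1) * (2 * x ^ (2*H-2)) ≤ 1 * (2 * x ^ (2*H-2)) :=
      mul_le_mul_of_nonneg_right (by linarith) (by linarith)
    linarith

lemma rho_pow_bound {H : ℝ} (hH2 : 1/2 < H) (hH1 : H < 1) (r : ℕ) (j : ℤ) :
    |rho H j| ^ r ≤ 8 ^ r * ((max j.natAbs 1 : ℕ) : ℝ) ^ ((2*H - 2) * r) := by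
  rcases Nat.eq_zero_or_pos j.natAbs with h0 | hpos
  · have hj : j = 0 := Int.natAbs_eq_zero.mp h0
    subst hj
    have hval : rho H 0 = 1 := by
      unfold rho
      rw [show ((0:ℤ):ℝ) + 1 = 1 by norm_num, show ((0:ℤ):ℝ) - 1 = -1 by norm_num,
        show ((0:ℤ):ℝ) = 0 by norm_num, abs_neg, abs_zero, abs_one, Real.one_rpow,
        Real.zero_rpow (by positivity : 2*H ≠ 0)]
      norm_num
    rw [hval, h0]
    simp only [abs_one, one_pow, Nat.cast_one]
    rw [show (max 0 1 : ℕ) = 1 by norm_num, Nat.cast_one, Real.one_rpow, mul_one]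
    exact one_le_pow₀ (by norm_num)
  · set m := j.natAbs with hm
    have hmax : max m 1 = m := max_eq_left hpos
    have hval : rho H j = rho H (m : ℤ) := by
      rcases Int.natAbs_eq j with h | h
      · rw [← hm] at h; exact h ▸ rfl
      · rw [← hm] at h; rw [h]; exact rho_neg H (m:ℤ)
    have hmR : (0:ℝ) ≤ (m:ℝ) := Nat.cast_nonneg m
    have hb : |rho H (m : ℤ)| ≤ 8 * (m : ℝ) ^ (2*H - 2) := rho_nat_bound hH2 hH1 m hpos
    calc |rho H j| ^ r = |rho H (m : ℤ)| ^ r := by rw [hval]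
      _ ≤ (8 * (m:ℝ) ^ (2*H - 2)) ^ r := pow_le_pow_left₀ (abs_nonneg _) hb r
      _ = 8 ^ r * (((m:ℝ) ^ (2*H - 2)) ^ (r:ℝ)) := by
          rw [mul_pow, Real.rpow_natCast]
      _ = 8 ^ r * (m:ℝ) ^ ((2*H - 2) * r) := by
          rw [← Real.rpow_mul hmR]
      _ = 8 ^ r * ((max m 1 : ℕ) : ℝ) ^ ((2*H - 2) * r) := by rw [hmax]

lemma sum_g_le {a : ℝ} (ha0 : 0 < a) (ha1 : a < 1) (N : ℕ) :
    ∑ m ∈ Finset.range N, ((max m 1 : ℕ) : ℝ) ^ (-a) ≤ 1 + (N:ℝ) ^ (1-a) / (1-a) := by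
  have h1a : (0:ℝ) < 1 - a := by linarith
  match N with
  | 0 =>
    simp only [Finset.range_zero, Finset.sum_empty]
    positivity
  | Nat.succ M =>
    rw [Finset.sum_range_succ']
    have h0 : ((max 0 1 : ℕ) : ℝ) ^ (-a) = 1 := by
      norm_num
    have hterm : ∀ i : ℕ, ((max (i+1) 1 : ℕ) : ℝ) ^ (-a)
        ≤ (((i:ℝ)+1) ^ (1-a) - (i:ℝ) ^ (1-a)) / (1-a) := by
      intro i
      have hmax : max (i+1) 1 = i + 1 := max_eq_left (Nat.succ_le_succ (Nat.zero_le i))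
      rw [hmax]
      obtain ⟨c, hcl, hcr, hceq⟩ := mvt_rpow h1a (Nat.cast_nonneg i)
        (by linarith [Nat.cast_nonneg (α := ℝ) i] : (i:ℝ) < (i:ℝ) + 1)
      have hc0 : (0:ℝ) < c := lt_of_le_of_lt (Nat.cast_nonneg i) hcl
      have hmono : ((i:ℝ)+1) ^ (-a) ≤ c ^ (-a) :=
        Real.rpow_le_rpow_of_nonpos hc0 hcr.le (by linarith)
      rw [le_div_iff₀ h1a]
      push_cast
      calc ((i:ℝ)+1) ^ (-a) * (1-a) ≤ c ^ (-a) * (1-a) :=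
            mul_le_mul_of_nonneg_right hmono h1a.le
        _ = ((i:ℝ)+1) ^ (1-a) - (i:ℝ) ^ (1-a) := by
            rw [hceq, show (1:ℝ) - a - 1 = -a by ring]; ring
    have hsum : ∑ i ∈ Finset.range M, ((max (i+1) 1 : ℕ) : ℝ) ^ (-a)
        ≤ (M:ℝ) ^ (1-a) / (1-a) := by
      calc ∑ i ∈ Finset.range M, ((max (i+1) 1 : ℕ) : ℝ) ^ (-a)
          ≤ ∑ i ∈ Finset.range M, ((((i:ℝ)+1) ^ (1-a) - (i:ℝ) ^ (1-a)) / (1-a)) :=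
            Finset.sum_le_sum fun i _ => hterm i
        _ = (∑ i ∈ Finset.range M, ((((i:ℝ)+1) ^ (1-a)) - ((i:ℝ) ^ (1-a)))) / (1-a) := by
            rw [Finset.sum_div]
        _ = ((M:ℝ) ^ (1-a) - ((0:ℕ):ℝ) ^ (1-a)) / (1-a) := by
            rw [show (∑ i ∈ Finset.range M, ((((i:ℝ)+1) ^ (1-a)) - ((i:ℝ) ^ (1-a))))
              = ∑ i ∈ Finset.range M, ((((i+1:ℕ):ℝ) ^ (1-a)) - (((i:ℕ):ℝ) ^ (1-a))) from
                Finset.sum_congr rfl (fun i _ => by push_cast; ring)]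
            rw [Finset.sum_range_sub (fun i : ℕ => ((i:ℕ):ℝ) ^ (1-a))]
        _ = (M:ℝ) ^ (1-a) / (1-a) := by
            rw [Nat.cast_zero, Real.zero_rpow (ne_of_gt h1a)]
            ring
        _ ≤ (M:ℝ) ^ (1-a) / (1-a) := le_refl _
    have hmono2 : (M:ℝ) ^ (1-a) ≤ ((M+1:ℕ):ℝ) ^ (1-a) := by
      apply Real.rpow_le_rpow (Nat.cast_nonneg M) _ h1a.le
      push_cast; linarith
    have hdiv : (M:ℝ) ^ (1-a) / (1-a) ≤ ((M+1:ℕ):ℝ) ^ (1-a) / (1-a) := by gcongr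
    rw [h0]
    push_cast
    push_cast at hsum hdiv
    linarith

lemma row_sum_le (g : ℕ → ℝ) (hg : ∀ m, 0 ≤ g m) (N k : ℕ) (hk : k < N) :
    ∑ l ∈ Finset.range N, g ((k:ℤ) - l).natAbs ≤ 2 * ∑ m ∈ Finset.range N, g m := by
  rw [two_mul, ← Finset.sum_filter_add_sum_filter_not (Finset.range N) (· ≤ k)]
  apply add_le_add
  · have hcongr : ∀ l ∈ (Finset.range N).filter (· ≤ k),
        g ((k:ℤ) - l).natAbs = g (k - l) := by
      intro l hl
      simp only [Finset.mem_filter, Finset.mem_range] at hl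
      congr 1
      omega
    have hinj : ∀ x ∈ (Finset.range N).filter (· ≤ k), ∀ y ∈ (Finset.range N).filter (· ≤ k),
        k - x = k - y → x = y := by
      intro x hx y hy hxy
      simp only [Finset.mem_filter, Finset.mem_range] at hx hy
      omega
    rw [Finset.sum_congr rfl hcongr, ← Finset.sum_image (f := g) (g := fun l => k - l) hinj]
    apply Finset.sum_le_sum_of_subset_of_nonneg
    · intro m hm
      simp only [Finset.mem_image, Finset.mem_filter, Finset.mem_range] at hm
      obtain ⟨l, ⟨hlN, hlk⟩, hml⟩ := hm
      simp only [Finset.mem_range]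
      omega
    · intro m _ _
      exact hg m
  · have hcongr : ∀ l ∈ (Finset.range N).filter (fun l => ¬ l ≤ k),
        g ((k:ℤ) - l).natAbs = g (l - k) := by
      intro l hl
      simp only [Finset.mem_filter, Finset.mem_range] at hl
      congr 1
      omega
    have hinj : ∀ x ∈ (Finset.range N).filter (fun l => ¬ l ≤ k),
        ∀ y ∈ (Finset.range N).filter (fun l => ¬ l ≤ k), x - k = y - k → x = y := by
      intro x hx y hy hxy
      simp only [Finset.mem_filter, Finset.mem_range] at hx hy
      omega
    rw [Finset.sum_congr rfl hcongr, ← Finset.sum_image (f := g) (g := fun l => l - k) hinj]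
    apply Finset.sum_le_sum_of_subset_of_nonneg
    · intro m hm
      simp only [Finset.mem_image, Finset.mem_filter, Finset.mem_range] at hm
      obtain ⟨l, ⟨hlN, hlk⟩, hml⟩ := hm
      simp only [Finset.mem_range]
      omega
    · intro m _ _
      exact hg m

theorem stmt_11 (H : ℝ) (hH0 : 0 < H) (hH1 : H < 1) (r : ℕ) (hr : 1 ≤ r)
    (hHr : H > 1 - 1/(2*r)) :
    ∃ C : ℝ, ∀ n : ℕ, 1 ≤ n → ∀ t : ℝ, 0 ≤ t →
      (2:ℝ) ^ (-(n:ℝ)*r*H) *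
        ∑ k ∈ Finset.range ⌊(2:ℝ) ^ ((n:ℝ)/2) * t⌋₊,
          ∑ l ∈ Finset.range ⌊(2:ℝ) ^ ((n:ℝ)/2) * t⌋₊, |rho H ((k:ℤ) - l)| ^ r
      ≤ C * (t * (2:ℝ) ^ ((n:ℝ) * (1/2 - r*H))
             + t ^ (2 - (2 - 2*H)*r) * (2:ℝ) ^ ((n:ℝ) * (1 - r))) := by
  have hrpos : (0:ℝ) < r := by exact_mod_cast hr
  have hrR : (1:ℝ) ≤ r := by exact_mod_cast hr
  have hH2 : 1/2 < H := by
    have h1 : 1/(2*(r:ℝ)) ≤ 1/2 := by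
      apply one_div_le_one_div_of_le (by norm_num)
      linarith
    linarith
  set a : ℝ := (2 - 2*H) * r with ha
  have ha0 : 0 < a := mul_pos (by linarith) hrpos
  have ha1 : a < 1 := by
    rw [ha, ← lt_div_iff₀ hrpos]
    have h2 : 1/(2*(r:ℝ)) = (1/(r:ℝ))/2 := by ring
    linarith
  have h1a : (0:ℝ) < 1 - a := by linarith
  refine ⟨2 * 8^r / (1 - a), ?_⟩
  intro n hn t ht
  set N := ⌊(2:ℝ) ^ ((n:ℝ)/2) * t⌋₊ with hNdef
  set E := -(n:ℝ)*r*H with hE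
  have h2E : (0:ℝ) < (2:ℝ)^E := Real.rpow_pos_of_pos two_pos E
  have h8r : (0:ℝ) < 8^r := by positivity
  have hC : (0:ℝ) < 2 * 8^r / (1-a) := by positivity
  have hT1 : (0:ℝ) ≤ t * (2:ℝ)^((n:ℝ)*(1/2 - r*H)) := by positivity
  have hT2 : (0:ℝ) ≤ t ^ (2 - a) * (2:ℝ)^((n:ℝ)*(1 - r)) :=
    mul_nonneg (Real.rpow_nonneg ht _) (Real.rpow_nonneg (by norm_num) _)
  rcases Nat.eq_zero_or_pos N with hN0 | hNpos
  · simp only [hN0, Finset.range_zero, Finset.sum_empty, mul_zero]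
    exact mul_nonneg hC.le (add_nonneg hT1 hT2)
  · have hNR : (1:ℝ) ≤ (N:ℝ) := by exact_mod_cast hNpos
    set g : ℕ → ℝ := fun m => ((max m 1 : ℕ) : ℝ) ^ (-a) with hg
    have hgnn : ∀ m, 0 ≤ g m := fun m => Real.rpow_nonneg (Nat.cast_nonneg _) _
    have he : (2*H - 2)*(r:ℝ) = -a := by rw [ha]; ring
    have hrow : ∀ k ∈ Finset.range N,
        ∑ l ∈ Finset.range N, |rho H ((k:ℤ) - l)| ^ r
          ≤ 8^r * (2 * (1 + (N:ℝ)^(1-a)/(1-a))) := by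
      intro k hk
      calc ∑ l ∈ Finset.range N, |rho H ((k:ℤ)-l)|^r
          ≤ ∑ l ∈ Finset.range N, 8^r * g (((k:ℤ)-l).natAbs) := by
            apply Finset.sum_le_sum
            intro l _
            have hb := rho_pow_bound hH2 hH1 r ((k:ℤ)-l)
            rw [he] at hb
            exact hb
        _ = 8^r * ∑ l ∈ Finset.range N, g (((k:ℤ)-l).natAbs) := by
            rw [Finset.mul_sum]
        _ ≤ 8^r * (2 * ∑ m ∈ Finset.range N, g m) := by
            apply mul_le_mul_of_nonneg_left _ h8r.le
            exact row_sum_le g hgnn N k (Finset.mem_range.mp hk)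
        _ ≤ 8^r * (2 * (1 + (N:ℝ)^(1-a)/(1-a))) := by
            apply mul_le_mul_of_nonneg_left _ h8r.le
            have := sum_g_le ha0 ha1 N
            linarith
    have hsum : ∑ k ∈ Finset.range N, ∑ l ∈ Finset.range N, |rho H ((k:ℤ)-l)|^r
        ≤ (N:ℝ) * (8^r * (2 * (1 + (N:ℝ)^(1-a)/(1-a)))) := by
      calc ∑ k ∈ Finset.range N, ∑ l ∈ Finset.range N, |rho H ((k:ℤ)-l)|^r
          ≤ ∑ _k ∈ Finset.range N, (8^r * (2 * (1 + (N:ℝ)^(1-a)/(1-a)))) :=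
            Finset.sum_le_sum hrow
        _ = (N:ℝ) * (8^r * (2 * (1 + (N:ℝ)^(1-a)/(1-a)))) := by
            rw [Finset.sum_const, Finset.card_range, nsmul_eq_mul]
    have hNle : (N:ℝ) ≤ (2:ℝ)^((n:ℝ)/2) * t := Nat.floor_le (by positivity)
    have h1 : (2:ℝ)^E * (N:ℝ) ≤ t * (2:ℝ)^((n:ℝ)*(1/2 - r*H)) := by
      calc (2:ℝ)^E * (N:ℝ) ≤ (2:ℝ)^E * ((2:ℝ)^((n:ℝ)/2) * t) :=
            mul_le_mul_of_nonneg_left hNle h2E.le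
        _ = t * ((2:ℝ)^E * (2:ℝ)^((n:ℝ)/2)) := by ring
        _ = t * (2:ℝ)^(E + (n:ℝ)/2) := by rw [← Real.rpow_add two_pos]
        _ = t * (2:ℝ)^((n:ℝ)*(1/2 - r*H)) := by
            rw [show E + (n:ℝ)/2 = (n:ℝ)*(1/2 - r*H) by rw [hE]; ring]
    have h2 : (2:ℝ)^E * ((N:ℝ) * (N:ℝ)^(1-a)) ≤ t^(2 - a) * (2:ℝ)^((n:ℝ)*(1 - r)) := by
      have hb0 : (0:ℝ) < (N:ℝ) := by linarith
      have hNpow : (N:ℝ) * (N:ℝ)^(1-a) = (N:ℝ)^(2 - a) := by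
        nth_rewrite 1 [← Real.rpow_one (N:ℝ)]
        rw [← Real.rpow_add hb0, show (1:ℝ) + (1-a) = 2 - a by ring]
      have hmono : (N:ℝ)^(2 - a) ≤ ((2:ℝ)^((n:ℝ)/2) * t)^(2 - a) :=
        Real.rpow_le_rpow hb0.le hNle (by linarith)
      have hsplit : ((2:ℝ)^((n:ℝ)/2) * t)^(2 - a)
          = (2:ℝ)^(((n:ℝ)/2)*(2 - a)) * t^(2 - a) := by
        rw [Real.mul_rpow (by positivity) ht, ← Real.rpow_mul (by norm_num : (0:ℝ) ≤ 2)]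
      calc (2:ℝ)^E * ((N:ℝ)*(N:ℝ)^(1-a)) = (2:ℝ)^E * (N:ℝ)^(2 - a) := by rw [hNpow]
        _ ≤ (2:ℝ)^E * ((2:ℝ)^(((n:ℝ)/2)*(2 - a)) * t^(2 - a)) := by
            rw [← hsplit]; exact mul_le_mul_of_nonneg_left hmono h2E.le
        _ = t^(2 - a) * ((2:ℝ)^E * (2:ℝ)^(((n:ℝ)/2)*(2 - a))) := by ring
        _ = t^(2 - a) * (2:ℝ)^(E + ((n:ℝ)/2)*(2 - a)) := by rw [← Real.rpow_add two_pos]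
        _ = t^(2 - a) * (2:ℝ)^((n:ℝ)*(1 - r)) := by
            rw [show E + ((n:ℝ)/2)*(2 - a) = (n:ℝ)*(1 - (r:ℝ)) by rw [hE, ha]; ring]
    have hc1 : 2*(8:ℝ)^r ≤ 2*8^r/(1-a) := by
      rw [le_div_iff₀ h1a]
      nlinarith
    calc (2:ℝ)^E * ∑ k ∈ Finset.range N, ∑ l ∈ Finset.range N, |rho H ((k:ℤ)-l)|^r
        ≤ (2:ℝ)^E * ((N:ℝ) * (8^r * (2 * (1 + (N:ℝ)^(1-a)/(1-a))))) :=
          mul_le_mul_of_nonneg_left hsum h2E.le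
      _ = 2*8^r * ((2:ℝ)^E * (N:ℝ))
          + 2*8^r/(1-a) * ((2:ℝ)^E * ((N:ℝ)*(N:ℝ)^(1-a))) := by
          field_simp
      _ ≤ 2*8^r * (t * (2:ℝ)^((n:ℝ)*(1/2 - r*H)))
          + 2*8^r/(1-a) * (t^(2 - a) * (2:ℝ)^((n:ℝ)*(1 - r))) :=
          add_le_add (mul_le_mul_of_nonneg_left h1 (by positivity))
            (mul_le_mul_of_nonneg_left h2 hC.le)
      _ ≤ 2*8^r/(1-a) * (t * (2:ℝ)^((n:ℝ)*(1/2 - r*H)))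
          + 2*8^r/(1-a) * (t^(2 - a) * (2:ℝ)^((n:ℝ)*(1 - r))) :=
          add_le_add (mul_le_mul_of_nonneg_right hc1 hT1) le_rfl
      _ = 2*8^r/(1-a) * (t * (2:ℝ)^((n:ℝ)*(1/2 - r*H))
          + t^(2 - a) * (2:ℝ)^((n:ℝ)*(1 - r))) := by ring
end

section
/- Let H ∈ (0,1) and X be a two-sided fractional Brownian motion with Hurst parameter H. Then for all integers n ≥ 1 and reals t ≥ 0, ∑_{k,l=0}^{⌊2^{n/2}t⌋-1} |E[X_{k2^{-n/2}} (X_{(l+1)2^{-n/2}} - X_{l2^{-n/2}})]| ≤ 2^{n/2 + 1} t^{2H+1}. -/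
open MeasureTheory ProbabilityTheory

private lemma tele_aux {a : ℕ → ℝ} {k N : ℕ} (hkN : k ≤ N)
    (h1 : ∀ i, i < k → a (i+1) ≤ a i)
    (h2 : ∀ i, k ≤ i → a i ≤ a (i+1)) :
    ∑ l ∈ Finset.range N, |a (l+1) - a l| = (a 0 - a k) + (a N - a k) := by
  rw [Finset.range_eq_Ico, ← Finset.sum_Ico_consecutive _ (Nat.zero_le k) hkN]
  have e1 : ∑ l ∈ Finset.Ico 0 k, |a (l+1) - a l| = a 0 - a k := by
    rw [← Finset.range_eq_Ico]
    rw [show (∑ l ∈ Finset.range k, |a (l+1) - a l|)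
        = ∑ l ∈ Finset.range k, (a l - a (l+1)) from
      Finset.sum_congr rfl fun l hl => by
        rw [abs_of_nonpos (by linarith [h1 l (Finset.mem_range.mp hl)]), neg_sub]]
    exact Finset.sum_range_sub' a k
  have e2 : ∑ l ∈ Finset.Ico k N, |a (l+1) - a l| = a N - a k := by
    rw [Finset.sum_Ico_eq_sum_range]
    rw [show (∑ l ∈ Finset.range (N - k), |a (k + l + 1) - a (k + l)|)
        = ∑ l ∈ Finset.range (N - k), (a (k + (l+1)) - a (k + l)) from
      Finset.sum_congr rfl fun l hl => by
        rw [show k + l + 1 = k + (l + 1) from by omega]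
        have := h2 (k+l) (Nat.le_add_right k l)
        rw [show k + l + 1 = k + (l + 1) from by omega] at this
        exact abs_of_nonneg (by linarith)]
    rw [Finset.sum_range_sub (fun i => a (k + i)), Nat.add_sub_cancel' hkN, Nat.add_zero]
  rw [e1, e2]

set_option maxHeartbeats 1000000 in
theorem stmt_12 {Ω : Type*} [MeasurableSpace Ω] (μ : Measure Ω) [IsProbabilityMeasure μ]
    (H : ℝ) (hH0 : 0 < H) (hH1 : H < 1) (X : ℝ → Ω → ℝ)
    (hmeas : ∀ t, Measurable (X t))
    (hgauss : ∀ (m : ℕ) (c : Fin m → ℝ) (ts : Fin m → ℝ), ∃ v : NNReal,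
      Measure.map (fun ω => ∑ i, c i * X (ts i) ω) μ = gaussianReal 0 v)
    (hint : ∀ s t : ℝ, Integrable (fun ω => X s ω * X t ω) μ)
    (hcov : ∀ s t : ℝ, ∫ ω, X t ω * X s ω ∂μ
      = (|s| ^ (2*H) + |t| ^ (2*H) - |t - s| ^ (2*H)) / 2) :
    ∀ (n : ℕ), 1 ≤ n → ∀ t : ℝ, 0 ≤ t →
      ∑ k ∈ Finset.range ⌊(2:ℝ) ^ ((n:ℝ)/2) * t⌋₊,
        ∑ l ∈ Finset.range ⌊(2:ℝ) ^ ((n:ℝ)/2) * t⌋₊,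
          |∫ ω, X ((k:ℝ) * (2:ℝ) ^ (-(n:ℝ)/2)) ω *
              (X (((l:ℝ) + 1) * (2:ℝ) ^ (-(n:ℝ)/2)) ω
                - X ((l:ℝ) * (2:ℝ) ^ (-(n:ℝ)/2)) ω) ∂μ|
        ≤ (2:ℝ) ^ ((n:ℝ)/2 + 1) * t ^ (2*H + 1) := by
  intro n hn t ht
  set p : ℝ := 2 * H with hp
  have hp0 : 0 < p := by positivity
  set D : ℝ := (2:ℝ) ^ ((n:ℝ)/2) with hD
  set δ : ℝ := (2:ℝ) ^ (-(n:ℝ)/2) with hδ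
  have hD0 : (0:ℝ) < D := Real.rpow_pos_of_pos two_pos _
  have hδ0 : (0:ℝ) < δ := Real.rpow_pos_of_pos two_pos _
  have hDδ : D * δ = 1 := by
    rw [hD, hδ, ← Real.rpow_add two_pos,
      show (n:ℝ)/2 + -(n:ℝ)/2 = 0 by ring, Real.rpow_zero]
  set N : ℕ := ⌊D * t⌋₊ with hN
  clear_value D δ
  clear_value N
  rcases eq_or_lt_of_le ht with ht0 | ht0
  · -- t = 0
    have hN0 : N = 0 := by rw [hN, ← ht0, mul_zero]; simp
    rw [hN0]
    simp only [Finset.range_zero, Finset.sum_empty]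
    have : (0:ℝ) ^ (2*H+1) = 0 := Real.zero_rpow (by positivity)
    rw [← ht0, this, mul_zero]
  · -- t > 0
    have hNDt : (N:ℝ) ≤ D * t := by
      rw [hN]; exact Nat.floor_le (mul_nonneg hD0.le ht)
    have hNδt : (N:ℝ) * δ ≤ t := by
      calc (N:ℝ) * δ ≤ (D * t) * δ := by nlinarith
        _ = t := by rw [mul_comm D t, mul_assoc, hDδ, mul_one]
    -- value of the integral
    have hval : ∀ a b c : ℝ, (∫ ω, X a ω * (X b ω - X c ω) ∂μ)
        = ((|b| ^ p - |c| ^ p) - (|a - b| ^ p - |a - c| ^ p)) / 2 := by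
      intro a b c
      have heq : (fun ω => X a ω * (X b ω - X c ω))
          = fun ω => X a ω * X b ω - X a ω * X c ω := by funext ω; ring
      rw [heq, integral_sub (hint a b) (hint a c), hcov b a, hcov c a, hp]
      ring
    -- pointwise bound
    have tpow_nonneg : (0:ℝ) ≤ t ^ p := Real.rpow_nonneg ht _
    have key : ∀ k ∈ Finset.range N,
        ∑ l ∈ Finset.range N,
          |∫ ω, X ((k:ℝ) * δ) ω * (X (((l:ℝ) + 1) * δ) ω - X ((l:ℝ) * δ) ω) ∂μ|
          ≤ 3/2 * t ^ p := by
      intro k hk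
      have hkN : k ≤ N := le_of_lt (Finset.mem_range.mp hk)
      -- two telescoping families
      set f : ℕ → ℝ := fun l => |(l:ℝ) * δ| ^ p with hf
      set g : ℕ → ℝ := fun l => |(k:ℝ) * δ - (l:ℝ) * δ| ^ p with hg
      have habs : ∀ l : ℕ, |(l:ℝ) * δ| = (l:ℝ) * δ := fun l =>
        abs_of_nonneg (by positivity)
      clear_value f g
      have hstep : ∑ l ∈ Finset.range N,
          |∫ ω, X ((k:ℝ) * δ) ω * (X (((l:ℝ) + 1) * δ) ω - X ((l:ℝ) * δ) ω) ∂μ|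
          ≤ (∑ l ∈ Finset.range N, |f (l+1) - f l|) / 2
            + (∑ l ∈ Finset.range N, |g (l+1) - g l|) / 2 := by
        calc ∑ l ∈ Finset.range N,
            |∫ ω, X ((k:ℝ) * δ) ω * (X (((l:ℝ) + 1) * δ) ω - X ((l:ℝ) * δ) ω) ∂μ|
            ≤ ∑ l ∈ Finset.range N, (|f (l+1) - f l| + |g (l+1) - g l|) / 2 := by
              apply Finset.sum_le_sum
              intro l hl
              rw [hval, abs_div, abs_two]
              have h2 := abs_sub ((|((l:ℝ)+1)*δ| ^ p - |(l:ℝ)*δ| ^ p))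
                ((|(k:ℝ)*δ - ((l:ℝ)+1)*δ| ^ p - |(k:ℝ)*δ - (l:ℝ)*δ| ^ p))
              simp only [hf, hg]
              push_cast
              linarith
          _ = (∑ l ∈ Finset.range N, |f (l+1) - f l|) / 2
              + (∑ l ∈ Finset.range N, |g (l+1) - g l|) / 2 := by
              rw [← Finset.sum_div, Finset.sum_add_distrib, add_div]
      -- bound the f-telescoping sum
      have hfsum : ∑ l ∈ Finset.range N, |f (l+1) - f l| ≤ t ^ p := by
        have hmono : ∀ i : ℕ, (0:ℕ) ≤ i → f i ≤ f (i+1) := by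
          intro i _
          simp only [hf]
          apply Real.rpow_le_rpow (abs_nonneg _) _ hp0.le
          rw [habs i, habs (i+1)]
          push_cast
          nlinarith
        have := tele_aux (a := f) (Nat.zero_le N)
          (fun i hi => absurd hi (Nat.not_lt_zero i)) hmono
        rw [this]
        have hf0 : f 0 = 0 := by
          simp only [hf, Nat.cast_zero, zero_mul, abs_zero]
          exact Real.zero_rpow hp0.ne'
        have hfN : f N ≤ t ^ p := by
          simp only [hf]
          rw [habs N]
          exact Real.rpow_le_rpow (by positivity) hNδt hp0.le
        linarith
      -- bound the g-telescoping sum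
      have hgsum : ∑ l ∈ Finset.range N, |g (l+1) - g l| ≤ 2 * t ^ p := by
        have h1 : ∀ i : ℕ, i < k → g (i+1) ≤ g i := by
          intro i hi
          simp only [hg]
          apply Real.rpow_le_rpow (abs_nonneg _) _ hp0.le
          have hik : (i:ℝ) + 1 ≤ (k:ℝ) := by exact_mod_cast hi
          push_cast
          rw [abs_of_nonneg (by nlinarith), abs_of_nonneg (by nlinarith)]
          nlinarith
        have h2 : ∀ i : ℕ, k ≤ i → g i ≤ g (i+1) := by
          intro i hi
          simp only [hg]
          apply Real.rpow_le_rpow (abs_nonneg _) _ hp0.le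
          have hik : (k:ℝ) ≤ (i:ℝ) := by exact_mod_cast hi
          push_cast
          rw [abs_of_nonpos (by nlinarith), abs_of_nonpos (by nlinarith)]
          nlinarith
        rw [tele_aux hkN h1 h2]
        have hgk : g k = 0 := by
          simp only [hg, sub_self, abs_zero]
          exact Real.zero_rpow hp0.ne'
        have hkδ : (k:ℝ) * δ ≤ t := by
          have : (k:ℝ) ≤ (N:ℝ) := by exact_mod_cast hkN
          nlinarith
        have hg0 : g 0 ≤ t ^ p := by
          simp only [hg, Nat.cast_zero, zero_mul, sub_zero]
          rw [abs_of_nonneg (by positivity)]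
          exact Real.rpow_le_rpow (by positivity) hkδ hp0.le
        have hgN : g N ≤ t ^ p := by
          simp only [hg]
          have hkNr : (k:ℝ) ≤ (N:ℝ) := by exact_mod_cast hkN
          rw [abs_of_nonpos (by nlinarith), neg_sub]
          apply Real.rpow_le_rpow (by nlinarith) _ hp0.le
          nlinarith
        linarith
      calc ∑ l ∈ Finset.range N,
          |∫ ω, X ((k:ℝ) * δ) ω * (X (((l:ℝ) + 1) * δ) ω - X ((l:ℝ) * δ) ω) ∂μ|
          ≤ (∑ l ∈ Finset.range N, |f (l+1) - f l|) / 2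
            + (∑ l ∈ Finset.range N, |g (l+1) - g l|) / 2 := hstep
        _ ≤ t ^ p / 2 + (2 * t ^ p) / 2 := by linarith
        _ = 3/2 * t ^ p := by ring
    calc ∑ k ∈ Finset.range N, ∑ l ∈ Finset.range N,
        |∫ ω, X ((k:ℝ) * δ) ω * (X (((l:ℝ) + 1) * δ) ω - X ((l:ℝ) * δ) ω) ∂μ|
        ≤ ∑ k ∈ Finset.range N, 3/2 * t ^ p := Finset.sum_le_sum key
      _ = (N:ℝ) * (3/2 * t ^ p) := by
          rw [Finset.sum_const, Finset.card_range, nsmul_eq_mul]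
      _ ≤ (2:ℝ) ^ ((n:ℝ)/2 + 1) * t ^ (p + 1) := by
          rw [show (2:ℝ) ^ ((n:ℝ)/2 + 1) = D * 2 from by
              rw [hD, Real.rpow_add two_pos, Real.rpow_one],
            show t ^ (p + 1) = t ^ p * t from by
              rw [Real.rpow_add ht0, Real.rpow_one]]
          nlinarith [mul_nonneg (sub_nonneg.mpr hNDt) tpow_nonneg,
            mul_nonneg (mul_nonneg hD0.le ht0.le) tpow_nonneg]
end
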